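/- (Dye) Let M and N be von Neumann algebras and θ : P(M) → P(N) a projection ortho-isomorphism. Then θ(0) = 0, θ(I) = I, θ(I − P) = I − θ(P) for all P ∈ P(M), θ preserves order in both directions (P ≤ Q ⟺ θ(P) ≤ θ(Q)), and θ preserves commutativity in both directions (PQ = QP ⟺ θ(P)θ(Q) = θ(Q)θ(P)). -/
import Mathlib


noncomputable section

namespace Stmt3

variable {H H' : Type*} [NormedAddCommGroup H] [InnerProductSpace ℂ H] [CompleteSpace H]
  [NormedAddCommGroup H'] [InnerProductSpace ℂ H'] [CompleteSpace H']

/-- The set of projections of the von Neumann algebra `M` (the projection lattice `P(M)`). -/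
def projSet (M : VonNeumannAlgebra H) : Set (H →L[ℂ] H) :=
  {P | P ∈ M ∧ P * P = P ∧ star P = P}

lemma zero_mem_projSet (M : VonNeumannAlgebra H) : (0 : H →L[ℂ] H) ∈ projSet M :=
  ⟨zero_mem M, by simp, by simp⟩

lemma one_mem_projSet (M : VonNeumannAlgebra H) : (1 : H →L[ℂ] H) ∈ projSet M :=
  ⟨one_mem M, by simp, by simp⟩

lemma compl_mem_projSet (M : VonNeumannAlgebra H) {P : H →L[ℂ] H} (hP : P ∈ projSet M) :
    (1 - P) ∈ projSet M := by
  obtain ⟨hm, hp, hs⟩ := hP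
  refine ⟨sub_mem (one_mem M) hm, ?_, by simp [star_sub, hs]⟩
  simp [sub_mul, mul_sub, hp]

lemma orth_symm {P Q : H →L[ℂ] H} (hP : star P = P) (hQ : star Q = Q)
    (h : P * Q = 0) : Q * P = 0 := by
  have h2 := congrArg star h
  rwa [star_mul, hP, hQ, star_zero] at h2

lemma proj_antisymm {P Q : H →L[ℂ] H} (hP : star P = P) (hQ : star Q = Q)
    (h1 : P * Q = P) (h2 : Q * P = Q) : P = Q := by
  have h3 := congrArg star h1
  rw [star_mul, hP, hQ] at h3
  rw [h2] at h3
  exact h3.symm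

lemma le_char (M : VonNeumannAlgebra H) {P Q : H →L[ℂ] H}
    (hP : P ∈ projSet M) (hQ : Q ∈ projSet M) :
    P * Q = P ↔ ∀ R, R ∈ projSet M → R * Q = 0 → R * P = 0 := by
  constructor
  · intro h R _ hRQ
    have hQP : Q * P = P := by
      have h2 := congrArg star h
      rwa [star_mul, hP.2.2, hQ.2.2] at h2
    calc R * P = R * (Q * P) := by rw [hQP]
      _ = R * Q * P := by rw [mul_assoc]
      _ = 0 := by rw [hRQ, zero_mul]
  · intro h
    have h1 : (1 - Q) * Q = 0 := by simp [sub_mul, hQ.2.1]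
    have h2 := h (1 - Q) (compl_mem_projSet M hQ) h1
    rw [sub_mul, one_mul, sub_eq_zero] at h2
    have hQP : Q * P = P := h2.symm
    have h3 := congrArg star hQP
    rwa [star_mul, hP.2.2, hQ.2.2] at h3

lemma comm_char (M : VonNeumannAlgebra H) {P Q : H →L[ℂ] H}
    (hP : P ∈ projSet M) (hQ : Q ∈ projSet M) :
    P * Q = Q * P ↔ ∃ E, E ∈ projSet M ∧ ∃ F, F ∈ projSet M ∧
      E * Q = E ∧ F * Q = 0 ∧ E * P = E ∧ F * P = F ∧ E * F = 0 ∧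
      ∀ R, R ∈ projSet M → E * R = E → F * R = F → P * R = P := by
  obtain ⟨hPm, hPi, hPs⟩ := hP
  obtain ⟨hQm, hQi, hQs⟩ := hQ
  constructor
  · intro h
    refine ⟨P * Q, ⟨mul_mem hPm hQm, ?_, ?_⟩, P - P * Q, ⟨sub_mem hPm (mul_mem hPm hQm), ?_, ?_⟩,
      ?_, ?_, ?_, ?_, ?_, ?_⟩
    · calc P * Q * (P * Q) = P * (Q * P) * Q := by rw [mul_assoc, mul_assoc, mul_assoc]
        _ = P * (P * Q) * Q := by rw [h]
        _ = P * P * (Q * Q) := by rw [mul_assoc, mul_assoc, mul_assoc]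
        _ = P * Q := by rw [hPi, hQi]
    · rw [star_mul, hPs, hQs, h]
    · -- (P - PQ)(P - PQ) = P - PQ
      have hPQP : P * Q * P = P * Q := by
        rw [mul_assoc, ← h, ← mul_assoc, hPi]
      have hPQPQ : P * Q * (P * Q) = P * Q := by
        rw [← mul_assoc, hPQP, mul_assoc, hQi]
      have hPPQ : P * (P * Q) = P * Q := by rw [← mul_assoc, hPi]
      rw [sub_mul, mul_sub, mul_sub, hPi, hPQP, hPQPQ, hPPQ]
      abel
    · rw [star_sub, hPs, star_mul, hPs, hQs, h]
    · rw [mul_assoc, hQi]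
    · rw [sub_mul, mul_assoc, hQi, sub_self]
    · rw [mul_assoc, ← h, ← mul_assoc, hPi]
    · have hPQP : P * Q * P = P * Q := by
        rw [mul_assoc, ← h, ← mul_assoc, hPi]
      rw [sub_mul, hPi, hPQP]
    · have hPQP : P * Q * P = P * Q := by
        rw [mul_assoc, ← h, ← mul_assoc, hPi]
      have hPQPQ : P * Q * (P * Q) = P * Q := by
        rw [← mul_assoc, hPQP, mul_assoc, hQi]
      rw [mul_sub, hPQP, hPQPQ, sub_self]
    · intro R _ hER hFR
      have : (P * Q + (P - P * Q)) * R = P * Q + (P - P * Q) := by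
        rw [add_mul, hER, hFR]
      simpa using this
  · rintro ⟨E, ⟨hEm, hEi, hEs⟩, F, ⟨hFm, hFi, hFs⟩, hEQ, hFQ, hEP, hFP, hEF, hsup⟩
    have hFE : F * E = 0 := orth_symm hEs hFs hEF
    have hSm : E + F ∈ projSet M := by
      refine ⟨add_mem hEm hFm, ?_, by rw [star_add, hEs, hFs]⟩
      rw [add_mul, mul_add, mul_add, hEi, hFi, hEF, hFE]
      abel
    have hPS : P * (E + F) = P :=
      hsup (E + F) hSm (by rw [mul_add, hEi, hEF, add_zero]) (by rw [mul_add, hFE, hFi, zero_add])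
    have hSP : (E + F) * P = E + F := by rw [add_mul, hEP, hFP]
    have hPeq : P = E + F := proj_antisymm hPs hSm.2.2 hPS hSP
    have hPQ : P * Q = E := by rw [hPeq, add_mul, hEQ, hFQ, add_zero]
    have hQP : Q * P = E := by
      have := congrArg star hPQ
      rwa [star_mul, hPs, hQs, hEs] at this
    rw [hPQ, hQP]

lemma le_transfer (M : VonNeumannAlgebra H) (N : VonNeumannAlgebra H')
    (θ : projSet M → projSet N) (hbij : Function.Bijective θ)
    (hortho : ∀ P Q : projSet M,
      (P : H →L[ℂ] H) * (Q : H →L[ℂ] H) = 0 ↔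
        (θ P : H' →L[ℂ] H') * (θ Q : H' →L[ℂ] H') = 0) (P Q : projSet M) :
    (P : H →L[ℂ] H) * (Q : H →L[ℂ] H) = (P : H →L[ℂ] H) ↔
      (θ P : H' →L[ℂ] H') * (θ Q : H' →L[ℂ] H') = (θ P : H' →L[ℂ] H') := by
  rw [le_char M P.2 Q.2, le_char N (θ P).2 (θ Q).2]
  constructor
  · intro h R' hR' hRQ
    obtain ⟨R, hR⟩ := hbij.2 ⟨R', hR'⟩
    have h1 : (θ R : H' →L[ℂ] H') * (θ Q : H' →L[ℂ] H') = 0 := by rw [hR]; exact hRQ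
    have h2 : (R : H →L[ℂ] H) * (Q : H →L[ℂ] H) = 0 := (hortho R Q).mpr h1
    have h3 := h R R.2 h2
    have h4 := (hortho R P).mp h3
    rw [hR] at h4; exact h4
  · intro h R hR hRQ
    exact (hortho ⟨R, hR⟩ P).mpr (h (θ ⟨R, hR⟩ : H' →L[ℂ] H') (θ ⟨R, hR⟩).2
      ((hortho ⟨R, hR⟩ Q).mp hRQ))

lemma comm_transfer_fwd (M : VonNeumannAlgebra H) (N : VonNeumannAlgebra H')
    (θ : projSet M → projSet N) (hbij : Function.Bijective θ)
    (hortho : ∀ P Q : projSet M,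
      (P : H →L[ℂ] H) * (Q : H →L[ℂ] H) = 0 ↔
        (θ P : H' →L[ℂ] H') * (θ Q : H' →L[ℂ] H') = 0) (P Q : projSet M)
    (h : (P : H →L[ℂ] H) * (Q : H →L[ℂ] H) = (Q : H →L[ℂ] H) * (P : H →L[ℂ] H)) :
    (θ P : H' →L[ℂ] H') * (θ Q : H' →L[ℂ] H') = (θ Q : H' →L[ℂ] H') * (θ P : H' →L[ℂ] H') := by
  rw [comm_char M P.2 Q.2] at h
  rw [comm_char N (θ P).2 (θ Q).2]
  obtain ⟨E, hEm, F, hFm, hEQ, hFQ, hEP, hFP, hEF, hsup⟩ := h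
  set Es : projSet M := ⟨E, hEm⟩
  set Fs : projSet M := ⟨F, hFm⟩
  refine ⟨θ Es, (θ Es).2, θ Fs, (θ Fs).2,
    (le_transfer M N θ hbij hortho Es Q).mp hEQ,
    (hortho Fs Q).mp hFQ,
    (le_transfer M N θ hbij hortho Es P).mp hEP,
    (le_transfer M N θ hbij hortho Fs P).mp hFP,
    (hortho Es Fs).mp hEF, ?_⟩
  intro R' hR' hER hFR
  obtain ⟨R, hR⟩ := hbij.2 ⟨R', hR'⟩
  have hER' : (θ Es : H' →L[ℂ] H') * (θ R : H' →L[ℂ] H') = (θ Es : H' →L[ℂ] H') := by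
    rw [hR]; exact hER
  have hFR' : (θ Fs : H' →L[ℂ] H') * (θ R : H' →L[ℂ] H') = (θ Fs : H' →L[ℂ] H') := by
    rw [hR]; exact hFR
  have h1 := hsup (R : H →L[ℂ] H) R.2
    ((le_transfer M N θ hbij hortho Es R).mpr hER')
    ((le_transfer M N θ hbij hortho Fs R).mpr hFR')
  have h2 := (le_transfer M N θ hbij hortho P R).mp h1
  rw [hR] at h2; exact h2


/-- **Dye.** A projection ortho-isomorphism `θ : P(M) → P(N)` preserves `0`,
`I`, ortho-complements, order (in both directions: `P ≤ Q ↔ θ P ≤ θ Q`, where for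
projections `P ≤ Q` means `P * Q = P`), and commutativity (in both directions). -/
theorem stmt3 (M : VonNeumannAlgebra H) (N : VonNeumannAlgebra H')
    (θ : projSet M → projSet N) (hbij : Function.Bijective θ)
    (hortho : ∀ P Q : projSet M,
      (P : H →L[ℂ] H) * (Q : H →L[ℂ] H) = 0 ↔
        (θ P : H' →L[ℂ] H') * (θ Q : H' →L[ℂ] H') = 0) :
    ((θ ⟨0, zero_mem_projSet M⟩ : H' →L[ℂ] H') = 0) ∧
    ((θ ⟨1, one_mem_projSet M⟩ : H' →L[ℂ] H') = 1) ∧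
    (∀ P : projSet M,
      (θ ⟨1 - (P : H →L[ℂ] H), compl_mem_projSet M P.2⟩ : H' →L[ℂ] H')
        = 1 - (θ P : H' →L[ℂ] H')) ∧
    (∀ P Q : projSet M,
      ((P : H →L[ℂ] H) * (Q : H →L[ℂ] H) = (P : H →L[ℂ] H) ↔
        (θ P : H' →L[ℂ] H') * (θ Q : H' →L[ℂ] H') = (θ P : H' →L[ℂ] H'))) ∧
    (∀ P Q : projSet M,
      ((P : H →L[ℂ] H) * (Q : H →L[ℂ] H) = (Q : H →L[ℂ] H) * (P : H →L[ℂ] H) ↔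
        (θ P : H' →L[ℂ] H') * (θ Q : H' →L[ℂ] H')
          = (θ Q : H' →L[ℂ] H') * (θ P : H' →L[ℂ] H'))) := by
  set e : projSet M ≃ projSet N := Equiv.ofBijective θ hbij with he
  have heapp : ∀ P, θ P = e P := fun _ => rfl
  have hortho' : ∀ P' Q' : projSet N,
      (P' : H' →L[ℂ] H') * (Q' : H' →L[ℂ] H') = 0 ↔
        (e.symm P' : H →L[ℂ] H) * (e.symm Q' : H →L[ℂ] H) = 0 := by
    intro P' Q'
    have h := hortho (e.symm P') (e.symm Q')
    rw [heapp, heapp, e.apply_symm_apply, e.apply_symm_apply] at h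
    exact h.symm
  -- 0
  have h0 : (θ ⟨0, zero_mem_projSet M⟩ : H' →L[ℂ] H') = 0 := by
    have h1 : (θ ⟨0, zero_mem_projSet M⟩ : H' →L[ℂ] H') *
        (θ ⟨0, zero_mem_projSet M⟩ : H' →L[ℂ] H') = 0 :=
      (hortho _ _).mp (by simp)
    rw [(θ ⟨0, zero_mem_projSet M⟩).2.2.1] at h1
    exact h1
  -- 1
  have h1 : (θ ⟨1, one_mem_projSet M⟩ : H' →L[ℂ] H') = 1 := by
    set T := θ ⟨1, one_mem_projSet M⟩
    obtain ⟨Q, hQ⟩ := hbij.2 ⟨1 - (T : H' →L[ℂ] H'), compl_mem_projSet N T.2⟩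
    have hTT : (θ Q : H' →L[ℂ] H') * (T : H' →L[ℂ] H') = 0 := by
      rw [hQ]; simp [sub_mul, T.2.2.1]
    have hQ1 : (Q : H →L[ℂ] H) * (1 : H →L[ℂ] H) = 0 := (hortho Q _).mpr hTT
    rw [mul_one] at hQ1
    have hQ0 : Q = ⟨0, zero_mem_projSet M⟩ := Subtype.ext hQ1
    rw [hQ0] at hQ
    have hv := congrArg (Subtype.val) hQ
    rw [h0] at hv
    have hv2 : (1 : H' →L[ℂ] H') - (T : H' →L[ℂ] H') = 0 := hv.symm
    rw [sub_eq_zero] at hv2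
    exact hv2.symm
  refine ⟨h0, h1, ?_, le_transfer M N θ hbij hortho, ?_⟩
  · -- complements
    intro P
    set Pc : projSet M := ⟨1 - (P : H →L[ℂ] H), compl_mem_projSet M P.2⟩
    set C := θ Pc
    set P' := θ P
    have hCP : (C : H' →L[ℂ] H') * (P' : H' →L[ℂ] H') = 0 :=
      (hortho Pc P).mp (by simp [Pc, sub_mul, P.2.2.1])
    have ha : (C : H' →L[ℂ] H') * (1 - (P' : H' →L[ℂ] H')) = C := by
      rw [mul_sub, mul_one, hCP, sub_zero]
    obtain ⟨R, hR⟩ := hbij.2 ⟨1 - (P' : H' →L[ℂ] H'), compl_mem_projSet N P'.2⟩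
    have hRP' : (θ R : H' →L[ℂ] H') * (P' : H' →L[ℂ] H') = 0 := by
      rw [hR]; simp [sub_mul, P'.2.2.1]
    have hRP : (R : H →L[ℂ] H) * (P : H →L[ℂ] H) = 0 := (hortho R P).mpr hRP'
    have hRPc : (R : H →L[ℂ] H) * (Pc : H →L[ℂ] H) = R := by
      show (R : H →L[ℂ] H) * (1 - (P : H →L[ℂ] H)) = R
      rw [mul_sub, mul_one, hRP, sub_zero]
    have hb : (1 - (P' : H' →L[ℂ] H')) * (C : H' →L[ℂ] H') = 1 - (P' : H' →L[ℂ] H') := by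
      have := (le_transfer M N θ hbij hortho R Pc).mp hRPc
      rw [hR] at this; exact this
    exact proj_antisymm C.2.2.2 ((compl_mem_projSet N P'.2).2.2) ha hb
  · -- commutativity
    intro P Q
    constructor
    · exact comm_transfer_fwd M N θ hbij hortho P Q
    · intro h
      have h2 := comm_transfer_fwd N M e.symm e.symm.bijective hortho' (θ P) (θ Q) h
      rw [heapp P, heapp Q, e.symm_apply_apply, e.symm_apply_apply] at h2
      exact h2


end Stmt3
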